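/- For every positive integer n, D_9(n) := Σ_{k=1}^{n} [2n, n−k] · k^9 equals [2n, n] · ((2n−1)^2 / 4) · (12n^3 − 48n^2 + 66n − 31) + (1/4) · (n^8 + 8n^7 + 22n^6 + 2n^5 − 98n^4 − 52n^3 + 283n^2 − 190n + 31). -/

import Mathlib

open Finset

/-- Rising factorial `(x)_n = x(x+1)⋯(x+n-1)`. -/
noncomputable def rfact (x : ℝ) : ℕ → ℝ
  | 0 => 1
  | n + 1 => rfact x n * (x + n)

/-- The bracket coefficient `[n, k] = (1/2)_n / ((1/2)_k (1/2)_{n-k})`. -/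
noncomputable def brkt (n k : ℕ) : ℝ :=
  rfact (1 / 2) n / (rfact (1 / 2) k * rfact (1 / 2) (n - k))

/-! With `b k = [2n, n - k]` the ratio `b (k + 1) / b k = (n - k - 1/2) / (n + k + 1/2)` is
rational in `k`, so Gosper's algorithm applies: `b k * k ^ 9 = b k * R k - b (k + 1) * R (k + 1)`
for an explicit polynomial `R = nineCertificate n`. The sum over `1 ≤ k < n` telescopes to
`b 1 * R 1 - R n`, the term `k = n` contributes `n ^ 9`, and `b 1` is `[2n, n]` times
`(n - 1/2) / (n + 1/2)`. -/

theorem rfact_succ (x : ℝ) (m : ℕ) : rfact x (m + 1) = rfact x m * (x + m) := rfl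

theorem rfact_pos {x : ℝ} (hx : 0 < x) (m : ℕ) : 0 < rfact x m := by
  induction m with
  | zero => exact one_pos
  | succ m ih => rw [rfact_succ]; positivity

theorem brkt_zero (N : ℕ) : brkt N 0 = 1 := by
  rw [brkt, Nat.sub_zero, rfact, one_mul, div_self (rfact_pos one_half_pos N).ne']

theorem brkt_succ_mul (N j : ℕ) (h : j + 1 ≤ N) :
    brkt N (j + 1) * (j + 1 / 2) = brkt N j * (N - j - 1 / 2) := by
  obtain ⟨m, rfl⟩ : ∃ m, N = j + 1 + m := ⟨N - (j + 1), by omega⟩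
  have hj := (rfact_pos one_half_pos j).ne'
  have hm := (rfact_pos one_half_pos m).ne'
  have hjm : j + 1 + m - j = m + 1 := by omega
  simp only [brkt, hjm, Nat.add_sub_cancel_left, rfact_succ]
  push_cast
  field_simp
  ring

theorem brkt_two_mul_sub_succ_mul {n k : ℕ} (hk : k < n) :
    brkt (2 * n) (n - (k + 1)) * (n + k + 1 / 2) = brkt (2 * n) (n - k) * (n - k - 1 / 2) := by
  have h := brkt_succ_mul (2 * n) (n - (k + 1)) (by omega)
  rw [show n - (k + 1) + 1 = n - k by omega, Nat.cast_sub (by omega : k + 1 ≤ n)] at h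
  push_cast at h
  linear_combination -h

theorem sum_Icc_one_eq_of_telescope {f g : ℕ → ℝ} {n : ℕ} (hn : 0 < n)
    (h : ∀ k ∈ Ico 1 n, f k = g k - g (k + 1)) :
    ∑ k ∈ Icc 1 n, f k = g 1 - g n + f n := by
  rw [← Ico_add_one_right_eq_Icc, sum_Ico_succ_top hn, sum_congr rfl h]
  have := sum_Ico_sub (fun k => -g k) hn
  simp only [sub_neg_eq_add, neg_add_eq_sub] at this
  rw [this]

noncomputable def nineCertificate (n k : ℝ) : ℝ :=
  k ^ 9 / 2 + (n / 2 - 9 / 4) * k ^ 8 + (2 * n ^ 2 - 8 * n + 21 / 2) * k ^ 6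
    + (6 * n ^ 3 - 28 * n ^ 2 + 95 * n / 2 - 63 / 2) * k ^ 4
    + (12 * n ^ 4 - 60 * n ^ 3 + 116 * n ^ 2 - 104 * n + 153 / 4) * k ^ 2
    + (12 * n ^ 5 - 60 * n ^ 4 + 117 * n ^ 3 - 109 * n ^ 2 + 95 * n / 2 - 31 / 4)

theorem nineCertificate_spec (n k : ℝ) :
    (n + k + 1 / 2) * k ^ 9 =
      (n + k + 1 / 2) * nineCertificate n k - (n - k - 1 / 2) * nineCertificate n (k + 1) := by
  unfold nineCertificate; ring

theorem brkt_mul_pow_nine_eq_sub {n k : ℕ} (hk : k < n) :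
    brkt (2 * n) (n - k) * (k : ℝ) ^ 9 =
      brkt (2 * n) (n - k) * nineCertificate n k -
        brkt (2 * n) (n - (k + 1)) * nineCertificate n (k + 1 : ℕ) := by
  have hpos : (n + k + 1 / 2 : ℝ) ≠ 0 := by positivity
  refine mul_right_cancel₀ hpos ?_
  push_cast
  linear_combination brkt (2 * n) (n - k) * nineCertificate_spec n k +
    nineCertificate n (k + 1) * brkt_two_mul_sub_succ_mul hk

theorem D_nine_eval (n : ℕ) (hn : 0 < n) :
    ∑ k ∈ Finset.Icc 1 n, brkt (2 * n) (n - k) * (k : ℝ) ^ 9 =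
      brkt (2 * n) n * ((2 * (n : ℝ) - 1) ^ 2 / 4) *
          (12 * (n : ℝ) ^ 3 - 48 * (n : ℝ) ^ 2 + 66 * (n : ℝ) - 31) +
        (1 / 4) *
          ((n : ℝ) ^ 8 + 8 * (n : ℝ) ^ 7 + 22 * (n : ℝ) ^ 6 + 2 * (n : ℝ) ^ 5 -
            98 * (n : ℝ) ^ 4 - 52 * (n : ℝ) ^ 3 + 283 * (n : ℝ) ^ 2 - 190 * (n : ℝ) + 31) := by
  rw [sum_Icc_one_eq_of_telescope (f := fun k => brkt (2 * n) (n - k) * (k : ℝ) ^ 9) hn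
      fun k hk => brkt_mul_pow_nine_eq_sub (mem_Ico.mp hk).2,
    Nat.sub_self, brkt_zero]
  have hb₁ := brkt_two_mul_sub_succ_mul hn
  simp only [Nat.sub_zero, zero_add, Nat.cast_zero] at hb₁
  unfold nineCertificate
  push_cast
  linear_combination (12 * (n : ℝ) ^ 3 - 48 * n ^ 2 + 66 * n - 31) * (n - 1 / 2) * hb₁
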